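/- Fix ρ > 0, σx² > 0, σw² > 0 with σw² < ρ·σx² (high SNR condition). For a nonzero training vector x ∈ ℂ^B, the zeroth-order symbol-estimate MSE with random channel evaluated at the MVU filter equals σw²·(σx² + ‖x‖²)/(ρ·‖x‖² + σw²), and this quantity is strictly decreasing in the training energy: for nonzero training vectors x, x' ∈ ℂ^B with ‖x‖ < ‖x'‖ one has σw²·(σx² + ‖x'‖²)/(ρ·‖x'‖² + σw²) < σw²·(σx² + ‖x‖²)/(ρ·‖x‖² + σw²). Hence [MSE_x^rc(ZF)]_0 under the MVU estimator depends on the training only through ‖x‖² and is minimized by spending the full training energy. -/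

import Mathlib

open MeasureTheory

/-- `φ(f) = fᴴ x = Σᵢ conj(fᵢ)·xᵢ`. -/
noncomputable def phi {B : ℕ} (x f : Fin B → ℂ) : ℂ :=
  ∑ i, (starRingEnd ℂ) (f i) * x i

/-- Squared Euclidean norm `‖f‖² = Σᵢ |fᵢ|²`. -/
noncomputable def nsq {B : ℕ} (f : Fin B → ℂ) : ℝ :=
  ∑ i, Complex.normSq (f i)

/-- Zeroth-order symbol-estimate MSE of the ZF equalizer, random channel with
prior second moment `ρ = E[|h|²]`, for the training vector `x`. -/
noncomputable def Mrc {B : ℕ} (σx2 σw2 ρ : ℝ) (x f : Fin B → ℂ) : ℝ :=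
  (σx2 * (ρ * Complex.normSq (phi x f - 1) + σw2 * nsq f) + σw2) /
    (ρ * Complex.normSq (phi x f) + σw2 * nsq f)

/-- The MVU channel-estimating filter `f_MVU = x / ‖x‖²` associated with `x`. -/
noncomputable def fMVU {B : ℕ} (x : Fin B → ℂ) : Fin B → ℂ :=
  fun i => x i / (nsq x : ℂ)

/-!
With `f_MVU = x/‖x‖²` one has `φ(f_MVU) = 1` and `‖f_MVU‖² = 1/‖x‖²`, so the bias term of the MSE
vanishes and clearing `‖x‖²` gives `σw²(σx² + ‖x‖²)/(ρ‖x‖² + σw²)`. As a function of `t = ‖x‖²`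
this is a Möbius map whose derivative has the sign of `σw² - ρσx²`, hence it is strictly
decreasing at high SNR.
-/

section Filters

variable {B : ℕ}

lemma nsq_nonneg (x : Fin B → ℂ) : 0 ≤ nsq x :=
  Finset.sum_nonneg fun i _ => Complex.normSq_nonneg (x i)

lemma nsq_pos {x : Fin B → ℂ} (hx : x ≠ 0) : 0 < nsq x := by
  refine (nsq_nonneg x).lt_of_ne fun h => hx (funext fun i => ?_)
  have hi := (Finset.sum_eq_zero_iff_of_nonneg fun i _ => Complex.normSq_nonneg (x i)).1
    h.symm i (Finset.mem_univ i)
  exact Complex.normSq_eq_zero.1 hi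

lemma phi_self (x : Fin B → ℂ) : phi x x = nsq x := by
  simp only [phi, nsq, Complex.ofReal_sum, Complex.normSq_eq_conj_mul_self]

lemma phi_div_ofReal (x f : Fin B → ℂ) (c : ℝ) :
    phi x (fun i => f i / (c : ℂ)) = phi x f / c := by
  simp only [phi, map_div₀, Complex.conj_ofReal, div_mul_eq_mul_div, Finset.sum_div]

lemma nsq_div_ofReal (f : Fin B → ℂ) (c : ℝ) :
    nsq (fun i => f i / (c : ℂ)) = nsq f / c ^ 2 := by
  simp only [nsq, Complex.normSq_div, Complex.normSq_ofReal, Finset.sum_div, sq]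

lemma phi_fMVU {x : Fin B → ℂ} (hx : x ≠ 0) : phi x (fMVU x) = 1 := by
  unfold fMVU
  rw [phi_div_ofReal, phi_self]
  exact div_self (Complex.ofReal_ne_zero.2 (nsq_pos hx).ne')

lemma nsq_fMVU (x : Fin B → ℂ) : nsq (fMVU x) = (nsq x)⁻¹ := by
  unfold fMVU
  rw [nsq_div_ofReal, sq, div_self_mul_self']

lemma Mrc_fMVU (σx2 σw2 ρ : ℝ) {x : Fin B → ℂ} (hx : x ≠ 0) :
    Mrc σx2 σw2 ρ x (fMVU x) = σw2 * (σx2 + nsq x) / (ρ * nsq x + σw2) := by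
  have hn : nsq x ≠ 0 := (nsq_pos hx).ne'
  rw [Mrc, phi_fMVU hx, nsq_fMVU, sub_self, Complex.normSq_zero, Complex.normSq_one, mul_zero,
    zero_add, ← mul_div_mul_right _ _ hn]
  congr 1 <;> field_simp

end Filters

lemma strictAntiOn_mvu_mse {σx2 σw2 ρ : ℝ} (hσw : 0 < σw2) (hρ : 0 ≤ ρ)
    (hSNR : σw2 < ρ * σx2) :
    StrictAntiOn (fun t : ℝ => σw2 * (σx2 + t) / (ρ * t + σw2)) (Set.Ici 0) := by
  intro a ha b hb hab
  simp only [Set.mem_Ici] at ha hb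
  rw [div_lt_div_iff₀ (by positivity) (by positivity)]
  -- the cross-multiplied difference factors as `σw² (b - a) (σw² - ρσx²)`
  nlinarith [mul_pos hσw (mul_pos (sub_pos.2 hab) (sub_pos.2 hSNR))]

theorem mvu_rc_mse_depends_only_on_training_energy_general
    (B : ℕ) (σx2 σw2 ρ : ℝ)
    (hσw : 0 < σw2) (hρ : 0 < ρ)
    (hSNR : σw2 < ρ * σx2) :
    (∀ x : Fin B → ℂ, x ≠ 0 →
      Mrc σx2 σw2 ρ x (fMVU x) = σw2 * (σx2 + nsq x) / (ρ * nsq x + σw2)) ∧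
    (∀ x x' : Fin B → ℂ, x ≠ 0 → x' ≠ 0 →
      Real.sqrt (nsq x) < Real.sqrt (nsq x') →
      σw2 * (σx2 + nsq x') / (ρ * nsq x' + σw2) <
        σw2 * (σx2 + nsq x) / (ρ * nsq x + σw2)) := by
  refine ⟨fun x hx => Mrc_fMVU σx2 σw2 ρ hx, fun x x' _ _ hlt => ?_⟩
  have henergy : nsq x < nsq x' := (Real.sqrt_lt_sqrt_iff (nsq_nonneg x)).1 hlt
  exact strictAntiOn_mvu_mse hσw hρ.le hSNR (nsq_nonneg x) (nsq_nonneg x') henergy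

/-- Under the MVU estimator, `[MSE_x^rc(ZF)]₀` equals
`σw²(σx² + ‖x‖²)/(ρ‖x‖² + σw²)`, which depends on the training only through the
training energy `‖x‖²`, and (at high SNR, `σw² < ρσx²`) it is strictly
decreasing in the training energy: it is minimized by spending the full
training energy. -/
theorem mvu_rc_mse_depends_only_on_training_energy
    (B : ℕ) (hB : 1 ≤ B) (σx2 σw2 ρ : ℝ)
    (hσx : 0 < σx2) (hσw : 0 < σw2) (hρ : 0 < ρ)
    (hSNR : σw2 < ρ * σx2) :
    (∀ x : Fin B → ℂ, x ≠ 0 →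
      Mrc σx2 σw2 ρ x (fMVU x) = σw2 * (σx2 + nsq x) / (ρ * nsq x + σw2)) ∧
    (∀ x x' : Fin B → ℂ, x ≠ 0 → x' ≠ 0 →
      Real.sqrt (nsq x) < Real.sqrt (nsq x') →
      σw2 * (σx2 + nsq x') / (ρ * nsq x' + σw2) <
        σw2 * (σx2 + nsq x) / (ρ * nsq x + σw2)) :=
  mvu_rc_mse_depends_only_on_training_energy_general B σx2 σw2 ρ hσw hρ hSNR
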